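/- Let σ be a magnetic form on 𝕋^{2N} encoded by smooth ℤ²-periodic functions a_1,…,a_N : ℝ² → ℝ. Then σ is non-resonant in period τ (i.e. for each j there is k_j ∈ ℤ with 2πk_j/τ < a_j(x) < 2π(k_j+1)/τ for all x ∈ ℝ²) if and only if there exists ε > 0 such that for every smooth loop γ : ℝ → ℝ^{2N} with γ(t+τ) − γ(t) a constant vector in ℤ^{2N}, and for every v ∈ ℝ^{2N}, one has |(F_σ^γ(τ) − Id)·v| ≥ ε·|v|. -/

import Mathlib

open Real Filter

noncomputable section

/-- Configuration space ℝ^{2N}: coordinate `(j, s)` is the `s`-th coordinate of the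
`j`-th particle, with the Euclidean norm. -/
abbrev Conf (N : ℕ) := EuclideanSpace ℝ (Fin N × Fin 2)

/-- The plane ℝ² with the Euclidean norm. -/
abbrev Plane := EuclideanSpace ℝ (Fin 2)

/-- The coordinates of the `j`-th particle. -/
def part {N : ℕ} (x : Conf N) (j : Fin N) : Plane := WithLp.toLp 2 (fun s => x (j, s))

/-- The lattice vector in ℝ^{2N} associated to `m ∈ ℤ^{2N}`. -/
def latVec {N : ℕ} (m : Fin N × Fin 2 → ℤ) : Conf N := WithLp.toLp 2 (fun i => (m i : ℝ))

/-- The lattice vector in ℝ² associated to `m ∈ ℤ²`. -/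
def latVec2 (m : Fin 2 → ℤ) : Plane := WithLp.toLp 2 (fun s => (m s : ℝ))

/-- A product magnetic form on 𝕋^{2N}, encoded by smooth ℤ²-periodic functions
`a j : ℝ² → ℝ`. -/
structure Magnetic (N : ℕ) where
  a : Fin N → Plane → ℝ
  smooth : ∀ j, ContDiff ℝ (⊤ : ℕ∞) (a j)
  periodic : ∀ j (x : Plane) (m : Fin 2 → ℤ), a j (x + latVec2 m) = a j x

/-- `σ` is non-resonant in period `τ`. -/
def Magnetic.NonResonant {N : ℕ} (σ : Magnetic N) (τ : ℝ) : Prop :=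
  ∀ j : Fin N, ∃ k : ℤ, ∀ x : Plane,
    2 * π * k / τ < σ.a j x ∧ σ.a j x < 2 * π * (k + 1) / τ

/-- The Lorentz force `Y_σ(x)·v`: block-diagonal action, the `j`-th 2×2 block being
`a_j(x_j)·J₀` with `J₀ = [[0,-1],[1,0]]`. -/
def lorentz {N : ℕ} (a : Fin N → Plane → ℝ) (x v : Conf N) : Conf N :=
  WithLp.toLp 2 (fun i => if i.2 = (0 : Fin 2) then -(a i.1 (part x i.1)) * v (i.1, 1)
           else (a i.1 (part x i.1)) * v (i.1, 0))

/-- A potential: smooth, τ-periodic in time and ℤ^{2N}-periodic in space. -/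
structure Potential (N : ℕ) (τ : ℝ) where
  V : ℝ → Conf N → ℝ
  smooth : ContDiff ℝ (⊤ : ℕ∞) (Function.uncurry V)
  periodic_t : ∀ t x, V (t + τ) x = V t x
  periodic_x : ∀ t (x : Conf N) (m : Fin N × Fin 2 → ℤ), V t (x + latVec m) = V t x

/-- A τ-periodic solution in class `h ∈ ℤ^{2N}` of
`γ'' = −Y_σ(γ)·γ' − ∇V_t(γ)`. -/
def IsSolution {N : ℕ} (σ : Magnetic N) {τ : ℝ} (P : Potential N τ)
    (h : Fin N × Fin 2 → ℤ) (γ : ℝ → Conf N) : Prop :=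
  ContDiff ℝ (⊤ : ℕ∞) γ ∧
  (∀ t, deriv (deriv γ) t =
    - lorentz σ.a (γ t) (deriv γ t) - gradient (P.V t) (γ t)) ∧
  (∀ t, γ (t + τ) = γ t + latVec h) ∧
  (∀ t, deriv γ (t + τ) = deriv γ t)

/-- Two solutions are identified iff they differ by a lattice translation. -/
def SameSol {N : ℕ} (γ₁ γ₂ : ℝ → Conf N) : Prop :=
  ∃ m : Fin N × Fin 2 → ℤ, ∀ t, γ₁ t = γ₂ t + latVec m

/-- Non-degeneracy of a τ-periodic solution: the only τ-periodic solution of the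
linearized equation is `ξ ≡ 0`. -/
def NonDegenerate {N : ℕ} (σ : Magnetic N) {τ : ℝ} (P : Potential N τ)
    (γ : ℝ → Conf N) : Prop :=
  ∀ ξ : ℝ → Conf N, ContDiff ℝ (⊤ : ℕ∞) ξ →
    (∀ t, deriv (deriv ξ) t =
      - fderiv ℝ (fun x => lorentz σ.a x (deriv γ t)) (γ t) (ξ t)
      - lorentz σ.a (γ t) (deriv ξ t)
      - fderiv ℝ (fun x => gradient (P.V t) x) (γ t) (ξ t)) →
    ξ τ = ξ 0 → deriv ξ τ = deriv ξ 0 → ∀ t, ξ t = 0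
open Matrix

/-- `b_j^γ(t) = ∫₀^t a_j(γ_j(s)) ds`. -/
def bgam {N : ℕ} (σ : Magnetic N) (γ : ℝ → Conf N) (j : Fin N) (t : ℝ) : ℝ :=
  ∫ s in (0:ℝ)..t, σ.a j (part (γ s) j)

/-- The rotation matrix `exp(θ·J₀) = [[cos θ, −sin θ],[sin θ, cos θ]]`. -/
def rotMat (θ : ℝ) : Matrix (Fin 2) (Fin 2) ℝ :=
  !![Real.cos θ, -Real.sin θ; Real.sin θ, Real.cos θ]

/-- `F_σ^γ(t)`: the block-diagonal matrix whose `j`-th 2×2 block is the rotation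
`exp(b_j^γ(t)·J₀)`. -/
def Fsol {N : ℕ} (σ : Magnetic N) (γ : ℝ → Conf N) (t : ℝ) :
    Matrix (Fin N × Fin 2) (Fin N × Fin 2) ℝ :=
  fun i k => if i.1 = k.1 then rotMat (bgam σ γ i.1 t) i.2 k.2 else 0

/-- `(F_σ^γ(τ) − Id)·v`, viewed as a vector of the Euclidean space ℝ^{2N}. -/
def FminusIdMulVec {N : ℕ} (σ : Magnetic N) (γ : ℝ → Conf N) (τ : ℝ) (v : Conf N) : Conf N :=
  (EuclideanSpace.equiv (Fin N × Fin 2) ℝ).symm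
    ((Fsol σ γ τ - 1).mulVec (EuclideanSpace.equiv (Fin N × Fin 2) ℝ v))

/-!
On the `j`-th plane, `F_σ^γ(τ) - Id` acts as `rotMat θ_j - 1` with `θ_j = b_j^γ(τ)`, and
`‖(rotMat θ - 1) w‖² = 2 (1 - cos θ) ‖w‖²`. A periodic `a_j` has compact range, so non-resonance
puts `τ a_j`, and hence its integral `θ_j`, in a fixed compact subinterval of
`(2πk_j, 2π(k_j + 1))`, which keeps `1 - cos θ_j` uniformly away from `0`. Conversely, if `a_j`
is resonant, the intermediate value theorem gives a point `z` with `τ a_j(z) ∈ 2πℤ`, and along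
the constant loop at `z` the block `rotMat θ_j - 1` vanishes.
-/

open Topology

theorem isCompact_range_of_periodic {Y : Type*} [TopologicalSpace Y] {f : Plane → Y}
    (hf : Continuous f) (hper : ∀ (x : Plane) (m : Fin 2 → ℤ), f (x + latVec2 m) = f x) :
    IsCompact (Set.range f) := by
  set K : Set Plane := WithLp.toLp 2 '' Set.univ.pi fun _ => Set.Icc 0 1
  have hK : IsCompact K :=
    (isCompact_univ_pi fun _ => isCompact_Icc).image (PiLp.continuous_toLp 2 _)
  suffices Set.range f = f '' K from this ▸ hK.image hf
  refine subset_antisymm ?_ (Set.image_subset_range _ _)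
  rintro _ ⟨x, rfl⟩
  refine ⟨WithLp.toLp 2 fun s => Int.fract (x s),
    ⟨_, fun s _ => ⟨Int.fract_nonneg _, (Int.fract_lt_one _).le⟩, rfl⟩, ?_⟩
  rw [← hper _ fun s => ⌊x s⌋]
  congr 1
  ext s
  simp [latVec2, Int.fract_add_floor]

theorem IsCompact.exists_pos_subset_Icc {s : Set ℝ} (hs : IsCompact s) {L U : ℝ}
    (h : s ⊆ Set.Ioo L U) : ∃ c > 0, s ⊆ Set.Icc (L + c) (U - c) := by
  obtain ⟨δ, hδ, hthick⟩ := hs.exists_thickening_subset_open isOpen_Ioo h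
  refine ⟨δ / 2, half_pos hδ, fun x hx => ?_⟩
  have hnear : ∀ y, |y - x| < δ → y ∈ Set.Ioo L U := fun y hy =>
    hthick (Metric.mem_thickening_iff.2 ⟨x, hx, by rwa [Real.dist_eq]⟩)
  have h₁ := hnear (x - δ / 2) (by rw [abs_lt]; constructor <;> linarith)
  have h₂ := hnear (x + δ / 2) (by rw [abs_lt]; constructor <;> linarith)
  exact ⟨by linarith [h₁.1], by linarith [h₂.2]⟩

theorem intervalIntegral.integral_mem_Icc_mul {g : ℝ → ℝ} {τ m M : ℝ} (hτ : 0 ≤ τ)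
    (hg : IntervalIntegrable g MeasureTheory.volume 0 τ)
    (h : ∀ s ∈ Set.Icc 0 τ, g s ∈ Set.Icc m M) :
    ∫ s in (0 : ℝ)..τ, g s ∈ Set.Icc (τ * m) (τ * M) :=
  ⟨by simpa using integral_mono_on hτ intervalIntegrable_const hg fun s hs => (h s hs).1,
    by simpa using integral_mono_on hτ hg intervalIntegrable_const fun s hs => (h s hs).2⟩

theorem Real.cos_le_cos_of_mem_Icc (k : ℤ) {c θ : ℝ} (hc : c ∈ Set.Icc 0 π)
    (hθ : θ ∈ Set.Icc (2 * π * k + c) (2 * π * (k + 1) - c)) : cos θ ≤ cos c := by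
  obtain ⟨hc₀, hcπ⟩ := hc
  have hperiod : cos θ = cos (θ - 2 * π * k) := by
    rw [← Real.cos_add_int_mul_two_pi (θ - 2 * π * k) k]; ring_nf
  rw [hperiod]
  rcases le_total (θ - 2 * π * k) π with hle | hle
  · exact Real.cos_le_cos_of_nonneg_of_le_pi hc₀ hle (by linarith [hθ.1])
  · rw [← Real.cos_two_pi_sub]
    exact Real.cos_le_cos_of_nonneg_of_le_pi hc₀ (by linarith) (by linarith [hθ.2])

theorem norm_sq_eq_sum_norm_part_sq {N : ℕ} (v : Conf N) :
    ‖v‖ ^ 2 = ∑ j, ‖part v j‖ ^ 2 := by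
  simp [EuclideanSpace.real_norm_sq_eq, part, Fintype.sum_prod_type]

theorem norm_rotMat_sub_one_mulVec_sq (θ : ℝ) (w : Plane) :
    ‖WithLp.toLp 2 ((rotMat θ - 1) *ᵥ w.ofLp)‖ ^ 2 = 2 * (1 - cos θ) * ‖w‖ ^ 2 := by
  have h01 : (1 : Matrix (Fin 2) (Fin 2) ℝ) = !![1, 0; 0, 1] := Matrix.one_fin_two
  simp only [EuclideanSpace.real_norm_sq_eq, Fin.sum_univ_two, rotMat, h01, Matrix.sub_apply,
    Matrix.mulVec_fin_two, Matrix.of_apply, Matrix.cons_val', Matrix.cons_val_zero,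
    Matrix.cons_val_one, Matrix.cons_val_fin_one]
  linear_combination (w 0 ^ 2 + w 1 ^ 2) * Real.sin_sq_add_cos_sq θ

theorem part_FminusIdMulVec {N : ℕ} (σ : Magnetic N) (γ : ℝ → Conf N) (τ : ℝ) (v : Conf N)
    (j : Fin N) :
    part (FminusIdMulVec σ γ τ v) j =
      WithLp.toLp 2 ((rotMat (bgam σ γ j τ) - 1) *ᵥ (part v j).ofLp) := by
  ext s
  change ((Fsol σ γ τ - 1) *ᵥ v.ofLp) (j, s) = _
  rw [Matrix.mulVec, dotProduct, Fintype.sum_prod_type, Finset.sum_eq_single j]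
  · simp [Fsol, part, Matrix.mulVec, dotProduct, Fin.sum_univ_two, Matrix.one_apply]
  · intro j' _ hj'
    simp [Fsol, Ne.symm hj']
  · simp

theorem norm_FminusIdMulVec_sq {N : ℕ} (σ : Magnetic N) (γ : ℝ → Conf N) (τ : ℝ) (v : Conf N) :
    ‖FminusIdMulVec σ γ τ v‖ ^ 2 = ∑ j, 2 * (1 - cos (bgam σ γ j τ)) * ‖part v j‖ ^ 2 := by
  simp_rw [norm_sq_eq_sum_norm_part_sq (FminusIdMulVec σ γ τ v), part_FminusIdMulVec,
    norm_rotMat_sub_one_mulVec_sq]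

theorem mul_norm_le_norm_FminusIdMulVec {N : ℕ} {σ : Magnetic N} {γ : ℝ → Conf N} {τ δ : ℝ}
    (hδ : 0 ≤ δ) (h : ∀ j, δ ≤ 1 - cos (bgam σ γ j τ)) (v : Conf N) :
    √(2 * δ) * ‖v‖ ≤ ‖FminusIdMulVec σ γ τ v‖ := by
  refine (pow_le_pow_iff_left₀ (by positivity) (norm_nonneg _) two_ne_zero).1 ?_
  rw [mul_pow, Real.sq_sqrt (by positivity), norm_FminusIdMulVec_sq, norm_sq_eq_sum_norm_part_sq,
    Finset.mul_sum]
  gcongr with j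
  linarith [h j]

theorem bgam_const {N : ℕ} (σ : Magnetic N) (x : Conf N) (j : Fin N) (τ : ℝ) :
    bgam σ (fun _ => x) j τ = τ * σ.a j (part x j) := by
  simp [bgam]

theorem bgam_mem_Icc {N : ℕ} (σ : Magnetic N) {γ : ℝ → Conf N} (hγ : Continuous γ) {τ : ℝ}
    (hτ : 0 ≤ τ) {j : Fin N} {m M : ℝ} (h : ∀ x, σ.a j x ∈ Set.Icc m M) :
    bgam σ γ j τ ∈ Set.Icc (τ * m) (τ * M) :=
  intervalIntegral.integral_mem_Icc_mul hτ
    (((σ.smooth j).continuous.comp ((PiLp.continuous_toLp 2 _).comp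
      (continuous_pi fun _ => (PiLp.continuous_apply 2 _ _).comp hγ))).intervalIntegrable 0 τ)
    fun _ _ => h _

theorem exists_pos_le_one_sub_cos_bgam {N : ℕ} (σ : Magnetic N) {τ : ℝ} (hτ : 0 < τ)
    {j : Fin N} (hj : ∃ k : ℤ, ∀ x, 2 * π * k / τ < σ.a j x ∧ σ.a j x < 2 * π * (k + 1) / τ) :
    ∃ δ > 0, ∀ γ : ℝ → Conf N, Continuous γ → δ ≤ 1 - cos (bgam σ γ j τ) := by
  obtain ⟨k, hk⟩ := hj
  obtain ⟨c, hc, hgap⟩ := (isCompact_range_of_periodic (σ.smooth j).continuous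
    (σ.periodic j)).exists_pos_subset_Icc (Set.range_subset_iff.2 hk)
  have hgap' : ∀ x, σ.a j x ∈ Set.Icc _ _ := fun x => hgap (Set.mem_range_self x)
  have hcτ : c * τ ≤ π := by
    have := (hgap' 0).1.trans (hgap' 0).2
    rw [← le_div_iff₀ hτ]
    linarith [show 2 * π * (k + 1) / τ = 2 * π * k / τ + 2 * (π / τ) by ring]
  refine ⟨1 - cos (c * τ), ?_, fun γ hγ => ?_⟩
  · have := Real.cos_lt_cos_of_nonneg_of_le_pi le_rfl hcτ (by positivity)
    rw [Real.cos_zero] at this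
    linarith
  · have hb := bgam_mem_Icc σ hγ hτ.le hgap'
    have hτk : ∀ r : ℝ, τ * (2 * π * r / τ) = 2 * π * r := fun r => by field_simp
    rw [mul_add, mul_sub, hτk, hτk, mul_comm τ c] at hb
    linarith [Real.cos_le_cos_of_mem_Icc k ⟨by positivity, hcτ⟩ hb]

theorem Magnetic.NonResonant.exists_forall_le_one_sub_cos_bgam {N : ℕ} {σ : Magnetic N} {τ : ℝ}
    (hσ : σ.NonResonant τ) (hτ : 0 < τ) :
    ∃ δ > 0, ∀ γ : ℝ → Conf N, Continuous γ → ∀ j, δ ≤ 1 - cos (bgam σ γ j τ) := by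
  have hev : ∀ j, ∀ᶠ δ in 𝓝[>] 0, ∀ γ : ℝ → Conf N, Continuous γ →
      δ ≤ 1 - cos (bgam σ γ j τ) := fun j => by
    obtain ⟨δ, hδ, hb⟩ := exists_pos_le_one_sub_cos_bgam σ hτ (hσ j)
    filter_upwards [Ioo_mem_nhdsGT hδ] with δ' hδ' γ hγ using hδ'.2.le.trans (hb γ hγ)
  obtain ⟨δ, hall, hδ⟩ := ((eventually_all.2 hev).and self_mem_nhdsWithin).exists
  exact ⟨δ, hδ, fun γ hγ j => hall j γ hγ⟩

theorem exists_eq_int_mul_of_forall_notMem_Ioo {X : Type*} [TopologicalSpace X]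
    [PreconnectedSpace X] [Nonempty X] {f : X → ℝ} (hf : Continuous f) {ρ : ℝ} (hρ : 0 < ρ)
    (h : ∀ k : ℤ, ∃ x, f x ∉ Set.Ioo (k * ρ) ((k + 1) * ρ)) : ∃ x, ∃ k : ℤ, f x = k * ρ := by
  obtain ⟨x₀⟩ := ‹Nonempty X›
  set k := ⌊f x₀ / ρ⌋
  have hlow : k * ρ ≤ f x₀ := (le_div_iff₀ hρ).1 (Int.floor_le _)
  have hhigh : f x₀ < (k + 1) * ρ := (div_lt_iff₀ hρ).1 (Int.lt_floor_add_one _)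
  obtain hk | hk := hlow.eq_or_lt
  · exact ⟨x₀, k, hk.symm⟩
  obtain ⟨y, hy⟩ := h k
  rw [Set.mem_Ioo, not_and_or, not_lt, not_lt] at hy
  rcases hy with hy | hy
  · obtain ⟨z, hz⟩ := intermediate_value_univ y x₀ hf ⟨hy, hlow⟩
    exact ⟨z, k, hz⟩
  · obtain ⟨z, hz⟩ := intermediate_value_univ x₀ y hf ⟨hhigh.le, hy⟩
    exact ⟨z, k + 1, by rw [hz]; push_cast; rfl⟩

theorem exists_norm_eq_one_FminusIdMulVec_eq_zero {N : ℕ} {σ : Magnetic N} {γ : ℝ → Conf N}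
    {τ : ℝ} {j : Fin N} (hcos : cos (bgam σ γ j τ) = 1) :
    ∃ v : Conf N, ‖v‖ = 1 ∧ FminusIdMulVec σ γ τ v = 0 := by
  refine ⟨EuclideanSpace.single (j, 0) 1, by simp, ?_⟩
  rw [← norm_eq_zero, ← sq_eq_zero_iff, norm_FminusIdMulVec_sq]
  refine Finset.sum_eq_zero fun j' _ => ?_
  obtain rfl | hj' := eq_or_ne j' j
  · simp [hcos]
  · have : part (EuclideanSpace.single (j, 0) (1 : ℝ)) j' = 0 := by
      ext s; simp [part, hj']
    simp [this]

theorem nonresonant_iff_quantitative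
    (N : ℕ) (τ : ℝ) (hτ : 0 < τ) (σ : Magnetic N) :
    σ.NonResonant τ ↔
    ∃ ε > (0:ℝ), ∀ γ : ℝ → Conf N, ContDiff ℝ (⊤ : ℕ∞) γ →
      (∃ h : Fin N × Fin 2 → ℤ, ∀ t, γ (t + τ) = γ t + latVec h) →
      ∀ v : Conf N, ε * ‖v‖ ≤ ‖FminusIdMulVec σ γ τ v‖ := by
  constructor
  · intro hσ
    obtain ⟨δ, hδ, hbound⟩ := hσ.exists_forall_le_one_sub_cos_bgam hτ
    exact ⟨√(2 * δ), by positivity, fun γ hγ _ =>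
      mul_norm_le_norm_FminusIdMulVec hδ.le (hbound γ hγ.continuous)⟩
  · rintro ⟨ε, hε, hbound⟩ j
    by_contra hj
    have hρ : ∀ r : ℝ, 2 * π * r / τ = r * (2 * π / τ) := fun r => by ring
    obtain ⟨z, k, hz⟩ := exists_eq_int_mul_of_forall_notMem_Ioo (σ.smooth j).continuous
      (by positivity : 0 < 2 * π / τ) fun k => by
        by_contra! hk
        exact hj ⟨k, fun x => by rw [hρ, hρ]; exact hk x⟩
    set x : Conf N := WithLp.toLp 2 fun i => z i.2
    have hcos : cos (bgam σ (fun _ => x) j τ) = 1 := by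
      rw [bgam_const, show part x j = z from rfl, hz,
        show τ * (k * (2 * π / τ)) = k * (2 * π) by field_simp]
      exact Real.cos_int_mul_two_pi k
    obtain ⟨v, hv, hFv⟩ := exists_norm_eq_one_FminusIdMulVec_eq_zero hcos
    have := hbound (fun _ => x) contDiff_const ⟨0, fun _ => by ext; simp [latVec]⟩ v
    rw [hv, hFv, norm_zero, mul_one] at this
    exact hε.not_ge this
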